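/- Let 𝔸 and 𝔹 be categories with finite limits, V : 𝔸 → 𝔹 a faithful functor preserving finite limits, and p : V×V×V → V a V-Mal'tsev operation. Let (A, s, t) and (A', s', t') be objects of 𝔸 with endomorphisms satisfying s∘t = t, t∘s = s, s'∘t' = t', t'∘s' = s'. Let τ : A' → A be a morphism with s∘τ∘s' = s∘τ and t∘τ∘t' = t∘τ, and let ψ : A' → A be a morphism satisfying V(ψ) = p_A⟨V(τ), V(τ∘s'), V(t∘τ∘s')⟩ (the codomain of the 2-cell τ). Then t∘ψ = t∘τ, ψ∘t' = t∘ψ, and s∘ψ = ψ∘s'; in particular ψ is a morphism (A',s',t') → (A,s,t) commuting with the endomorphism pairs. -/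

import Mathlib

open CategoryTheory CategoryTheory.Limits

/-- A `V`-Mal'tsev operation: a natural transformation `p : V×V×V → V` whose
components `p_A : V(A) × V(A) × V(A) ⟶ V(A)` satisfy
`p_A ∘ ⟨x,y,y⟩ = x = p_A ∘ ⟨y,y,x⟩`. -/
structure VMaltsevOperation {𝔸 𝔹 : Type*} [Category 𝔸] [Category 𝔹]
    [HasFiniteLimits 𝔹] (V : 𝔸 ⥤ 𝔹) where
  app : ∀ A : 𝔸, (V.obj A ⨯ V.obj A ⨯ V.obj A) ⟶ V.obj A
  naturality : ∀ {A A' : 𝔸} (f : A ⟶ A'),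
    prod.map (V.map f) (prod.map (V.map f) (V.map f)) ≫ app A' = app A ≫ V.map f
  maltsev_left : ∀ {T : 𝔹} {A : 𝔸} (x y : T ⟶ V.obj A),
    prod.lift x (prod.lift y y) ≫ app A = x
  maltsev_right : ∀ {T : 𝔹} {A : 𝔸} (x y : T ⟶ V.obj A),
    prod.lift y (prod.lift y x) ≫ app A = x

/-- The Mal'tsev operation applied to three generalized elements `x, y, z : T ⟶ V(A)`:
`p_A ∘ ⟨x, y, z⟩`. -/
noncomputable def VMaltsevOperation.papp {𝔸 𝔹 : Type*} [Category 𝔸] [Category 𝔹]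
    [HasFiniteLimits 𝔹] {V : 𝔸 ⥤ 𝔹} (p : VMaltsevOperation V)
    {T : 𝔹} {A : 𝔸} (x y z : T ⟶ V.obj A) : T ⟶ V.obj A :=
  prod.lift x (prod.lift y z) ≫ p.app A

/-- Property (P1) for a triple `(A, s, t)`: for all `α, β, γ : X ⟶ A` with
`s∘α = s∘β` and `t∘β = t∘γ` there is a unique `φ : X ⟶ A` with
`V(φ) = p_A ∘ ⟨V(α), V(β), V(γ)⟩`. -/
def PropertyP1 {𝔸 𝔹 : Type*} [Category 𝔸] [Category 𝔹]
    [HasFiniteLimits 𝔹] {V : 𝔸 ⥤ 𝔹} (p : VMaltsevOperation V)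
    {A : 𝔸} (s t : A ⟶ A) : Prop :=
  ∀ (X : 𝔸) (α β γ : X ⟶ A), α ≫ s = β ≫ s → β ≫ t = γ ≫ t →
    ∃! φ : X ⟶ A, V.map φ = p.papp (V.map α) (V.map β) (V.map γ)

/-!
Each equation is checked after applying the faithful functor `V`. By naturality of `p`,
composing `ψ` with `s`, `t`, `s'` or `t'` turns `V(ψ)` into `p` applied to the composites of
`V(τ)`, `V(τ∘s')`, `V(t∘τ∘s')`; the hypotheses make two neighbouring arguments equal, and a
Mal'tsev identity collapses the result to a composite of `τ`.
-/

theorem CategoryTheory.comp_self_eq_of_comp_eq_of_comp_eq {C : Type*} [Category C] {X : C}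
    {s t : X ⟶ X} (hst : t ≫ s = t) (hts : s ≫ t = s) : t ≫ t = t := by
  nth_rw 1 [← hst]
  rw [Category.assoc, hts, hst]

namespace VMaltsevOperation

variable {𝔸 𝔹 : Type*} [Category 𝔸] [Category 𝔹] [HasFiniteLimits 𝔹] {V : 𝔸 ⥤ 𝔹}
  (p : VMaltsevOperation V)

theorem papp_self_right {T : 𝔹} {A : 𝔸} (x y : T ⟶ V.obj A) : p.papp x y y = x :=
  p.maltsev_left x y

theorem papp_self_left {T : 𝔹} {A : 𝔸} (x y : T ⟶ V.obj A) : p.papp y y x = x :=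
  p.maltsev_right x y

theorem comp_papp {T T' : 𝔹} {A : 𝔸} (g : T' ⟶ T) (x y z : T ⟶ V.obj A) :
    g ≫ p.papp x y z = p.papp (g ≫ x) (g ≫ y) (g ≫ z) := by
  simp only [papp, ← Category.assoc, prod.comp_lift]

theorem papp_comp_map {T : 𝔹} {A B : 𝔸} (x y z : T ⟶ V.obj A) (f : A ⟶ B) :
    p.papp x y z ≫ V.map f = p.papp (x ≫ V.map f) (y ≫ V.map f) (z ≫ V.map f) := by
  simp only [papp, Category.assoc, ← p.naturality f, prod.lift_map_assoc, prod.lift_map]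

theorem map_postcomp_eq_papp {X A B : 𝔸} {φ α β γ : X ⟶ A}
    (h : V.map φ = p.papp (V.map α) (V.map β) (V.map γ)) (g : A ⟶ B) :
    V.map (φ ≫ g) = p.papp (V.map (α ≫ g)) (V.map (β ≫ g)) (V.map (γ ≫ g)) := by
  simp only [V.map_comp, h, papp_comp_map]

theorem map_precomp_eq_papp {Y X A : 𝔸} {φ α β γ : X ⟶ A}
    (h : V.map φ = p.papp (V.map α) (V.map β) (V.map γ)) (f : Y ⟶ X) :
    V.map (f ≫ φ) = p.papp (V.map (f ≫ α)) (V.map (f ≫ β)) (V.map (f ≫ γ)) := by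
  simp only [V.map_comp, h, comp_papp]

variable [V.Faithful]

theorem eq_of_map_eq_papp_self_right {X A : 𝔸} {φ α β : X ⟶ A}
    (h : V.map φ = p.papp (V.map α) (V.map β) (V.map β)) : φ = α :=
  V.map_injective (h.trans (p.papp_self_right _ _))

theorem eq_of_map_eq_papp_self_left {X A : 𝔸} {φ β γ : X ⟶ A}
    (h : V.map φ = p.papp (V.map β) (V.map β) (V.map γ)) : φ = γ :=
  V.map_injective (h.trans (p.papp_self_left _ _))

end VMaltsevOperation

theorem cod_of_twoCell_is_morphism_general
    {𝔸 𝔹 : Type*} [Category 𝔸] [Category 𝔹]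
    [HasFiniteLimits 𝔹]
    (V : 𝔸 ⥤ 𝔹) [V.Faithful]
    (p : VMaltsevOperation V)
    {A A' : 𝔸} (s t : A ⟶ A) (s' t' : A' ⟶ A')
    (hst : t ≫ s = t) (hts : s ≫ t = s)
    (hst' : t' ≫ s' = t') (hts' : s' ≫ t' = s')
    (τ : A' ⟶ A)
    (hτs : s' ≫ τ ≫ s = τ ≫ s) (hτt : t' ≫ τ ≫ t = τ ≫ t)
    (ψ : A' ⟶ A)
    (hψ : V.map ψ = p.papp (V.map τ) (V.map (s' ≫ τ)) (V.map (s' ≫ τ ≫ t))) :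
    ψ ≫ t = τ ≫ t ∧ t' ≫ ψ = ψ ≫ t ∧ ψ ≫ s = s' ≫ ψ := by
  have htt : t ≫ t = t := comp_self_eq_of_comp_eq_of_comp_eq hst hts
  have hs's' : s' ≫ s' = s' := comp_self_eq_of_comp_eq_of_comp_eq hts' hst'
  have hψt : ψ ≫ t = τ ≫ t := p.eq_of_map_eq_papp_self_right <| by
    simpa only [Category.assoc, htt] using p.map_postcomp_eq_papp hψ t
  have ht'ψ : t' ≫ ψ = τ ≫ t := p.eq_of_map_eq_papp_self_left <| by
    simpa only [reassoc_of% hst', hτt] using p.map_precomp_eq_papp hψ t'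
  have hψs : ψ ≫ s = s' ≫ τ ≫ t := p.eq_of_map_eq_papp_self_left <| by
    simpa only [Category.assoc, hτs, hst] using p.map_postcomp_eq_papp hψ s
  have hs'ψ : s' ≫ ψ = s' ≫ τ ≫ t := p.eq_of_map_eq_papp_self_left <| by
    simpa only [reassoc_of% hs's'] using p.map_precomp_eq_papp hψ s'
  exact ⟨hψt, ht'ψ.trans hψt.symm, hψs.trans hs'ψ.symm⟩

/-- The codomain `ψ` of a 2-cell `τ`, defined by `V(ψ) = p⟨V(τ), V(τ∘s'), V(t∘τ∘s')⟩`,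
satisfies `t∘ψ = t∘τ`, `ψ∘t' = t∘ψ` and `s∘ψ = ψ∘s'`; in particular it is a morphism
`(A',s',t') → (A,s,t)`. -/
theorem cod_of_twoCell_is_morphism
    {𝔸 𝔹 : Type*} [Category 𝔸] [Category 𝔹]
    [HasFiniteLimits 𝔸] [HasFiniteLimits 𝔹]
    (V : 𝔸 ⥤ 𝔹) [V.Faithful] [PreservesFiniteLimits V]
    (p : VMaltsevOperation V)
    {A A' : 𝔸} (s t : A ⟶ A) (s' t' : A' ⟶ A')
    (hst : t ≫ s = t) (hts : s ≫ t = s)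
    (hst' : t' ≫ s' = t') (hts' : s' ≫ t' = s')
    (τ : A' ⟶ A)
    (hτs : s' ≫ τ ≫ s = τ ≫ s) (hτt : t' ≫ τ ≫ t = τ ≫ t)
    (ψ : A' ⟶ A)
    (hψ : V.map ψ = p.papp (V.map τ) (V.map (s' ≫ τ)) (V.map (s' ≫ τ ≫ t))) :
    ψ ≫ t = τ ≫ t ∧ t' ≫ ψ = ψ ≫ t ∧ ψ ≫ s = s' ≫ ψ :=
  cod_of_twoCell_is_morphism_general V p s t s' t' hst hts hst' hts' τ hτs hτt ψ hψ
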